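/- arXiv:1403.7106 — 4 statements merged into one kernel-verified Lean document; each statement's English description precedes it below -/
import Mathlib

section
/- Let the system F_j(x,u(x),Du_j(x),D²u_j(x)) = 0, j = 1,…,m₁+m₂, be degenerate elliptic and balanced quasi-monotone. If (u₁,u₂) and (v₁,v₂) are super-sub solutions in Ω, then the function (w₁,w₂) defined componentwise by w₁(x) = min(u₁(x),v₁(x)) and w₂(x) = max(u₂(x),v₂(x)) is also a super-sub solution in Ω. -/
open Filter Topology Matrix Bornology

noncomputable section

/-- Euclidean space ℝⁿ. -/
abbrev En (n : ℕ) := EuclideanSpace ℝ (Fin n)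

/-- n×n real matrices (the symmetric ones model 𝒮ⁿ). -/
abbrev Symn (n : ℕ) := Matrix (Fin n) (Fin n) ℝ

/-- Loewner order: `X ≤ Y` iff `Y - X` is positive semidefinite. -/
def LoewnerLE {ι : Type*} [Fintype ι] (X Y : Matrix ι ι ℝ) : Prop := (Y - X).PosSemidef

/-- Upper semicontinuous envelope relative to Ω: f*(x) = limsup_{Ω ∋ y → x} f(y). -/
def uEnv {n : ℕ} (Ω : Set (En n)) (f : En n → ℝ) (x : En n) : ℝ := limsup f (𝓝[Ω] x)

/-- Lower semicontinuous envelope relative to Ω: f_*(x) = liminf_{Ω ∋ y → x} f(y). -/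
def lEnv {n : ℕ} (Ω : Set (En n)) (f : En n → ℝ) (x : En n) : ℝ := liminf f (𝓝[Ω] x)

/-- φ touches f from above at x (within Ω). -/
def TouchAbove {n : ℕ} (Ω : Set (En n)) (φ f : En n → ℝ) (x : En n) : Prop :=
  φ x = f x ∧ ∃ N : Set (En n), IsOpen N ∧ x ∈ N ∧ ∀ y ∈ (N ∩ Ω) \ {x}, f y < φ y

/-- φ touches f from below at x (within Ω). -/
def TouchBelow {n : ℕ} (Ω : Set (En n)) (φ f : En n → ℝ) (x : En n) : Prop :=
  φ x = f x ∧ ∃ N : Set (En n), IsOpen N ∧ x ∈ N ∧ ∀ y ∈ (N ∩ Ω) \ {x}, φ y < f y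

/-- Hessian matrix D²φ(x) of a scalar function. -/
def hess {n : ℕ} (φ : En n → ℝ) (x : En n) : Symn n :=
  Matrix.of fun i j =>
    iteratedFDeriv ℝ 2 φ x ![EuclideanSpace.single i 1, EuclideanSpace.single j 1]

/-- The type of the operators F_j(x, r, s, p, X). -/
abbrev Op (n m₁ m₂ : ℕ) :=
  En n → (Fin m₁ → ℝ) → (Fin m₂ → ℝ) → En n → Symn n → ℝ

/-- Continuity of an operator on Ω × ℝ^{m₁} × ℝ^{m₂} × ℝⁿ × 𝒮ⁿ. -/
def OpContinuousOn {n m₁ m₂ : ℕ} (Ω : Set (En n)) (F : Op n m₁ m₂) : Prop :=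
  ContinuousOn (fun q : En n × (Fin m₁ → ℝ) × (Fin m₂ → ℝ) × En n × Symn n =>
      F q.1 q.2.1 q.2.2.1 q.2.2.2.1 q.2.2.2.2)
    (Ω ×ˢ (Set.univ : Set ((Fin m₁ → ℝ) × (Fin m₂ → ℝ) × En n × Symn n)))

/-- Degenerate ellipticity of an operator. -/
def DegElliptic {n m₁ m₂ : ℕ} (Ω : Set (En n)) (F : Op n m₁ m₂) : Prop :=
  ∀ x ∈ Ω, ∀ (r : Fin m₁ → ℝ) (s : Fin m₂ → ℝ) (p : En n) (X Y : Symn n),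
    X.IsSymm → Y.IsSymm → LoewnerLE X Y → F x r s p Y ≤ F x r s p X

/-- Balanced quasi-monotonicity of the system (F1, F2). -/
def BalancedQM {n m₁ m₂ : ℕ} (Ω : Set (En n))
    (F1 : Fin m₁ → Op n m₁ m₂) (F2 : Fin m₂ → Op n m₁ m₂) : Prop :=
  (∀ j, ∀ x ∈ Ω, ∀ (r : Fin m₁ → ℝ) (s σ : Fin m₂ → ℝ) (p : En n) (X : Symn n), X.IsSymm →
      (∀ i, s i ≤ σ i) → F1 j x r s p X ≤ F1 j x r σ p X) ∧
  (∀ j, ∀ x ∈ Ω, ∀ (r ρ : Fin m₁ → ℝ) (s : Fin m₂ → ℝ) (p : En n) (X : Symn n), X.IsSymm →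
      (∀ i, r i ≤ ρ i) → r j = ρ j → F1 j x ρ s p X ≤ F1 j x r s p X) ∧
  (∀ j, ∀ x ∈ Ω, ∀ (r ρ : Fin m₁ → ℝ) (s : Fin m₂ → ℝ) (p : En n) (X : Symn n), X.IsSymm →
      (∀ i, r i ≤ ρ i) → F2 j x r s p X ≤ F2 j x ρ s p X) ∧
  (∀ j, ∀ x ∈ Ω, ∀ (r : Fin m₁ → ℝ) (s σ : Fin m₂ → ℝ) (p : En n) (X : Symn n), X.IsSymm →
      (∀ i, s i ≤ σ i) → s j = σ j → F2 j x r σ p X ≤ F2 j x r s p X)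

/-- Boundedness of a vector-valued function on Ω. -/
def BddOn {n m : ℕ} (Ω : Set (En n)) (u : En n → Fin m → ℝ) : Prop :=
  ∃ M : ℝ, ∀ x ∈ Ω, ∀ i, |u x i| ≤ M

/-- (u1, u2) is a super-sub solution of the system (F1, F2) in Ω. -/
def SuperSub {n m₁ m₂ : ℕ} (Ω : Set (En n))
    (F1 : Fin m₁ → Op n m₁ m₂) (F2 : Fin m₂ → Op n m₁ m₂)
    (u1 : En n → Fin m₁ → ℝ) (u2 : En n → Fin m₂ → ℝ) : Prop :=
  BddOn Ω u1 ∧ BddOn Ω u2 ∧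
  (∀ j, ∀ x ∈ Ω, ∀ φ : En n → ℝ, ContDiff ℝ 2 φ →
      TouchBelow Ω φ (lEnv Ω fun y => u1 y j) x →
      0 ≤ F1 j x (fun i => lEnv Ω (fun y => u1 y i) x) (fun i => uEnv Ω (fun y => u2 y i) x)
            (gradient φ x) (hess φ x)) ∧
  (∀ j, ∀ x ∈ Ω, ∀ φ : En n → ℝ, ContDiff ℝ 2 φ →
      TouchAbove Ω φ (uEnv Ω fun y => u2 y j) x →
      F2 j x (fun i => lEnv Ω (fun y => u1 y i) x) (fun i => uEnv Ω (fun y => u2 y i) x)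
          (gradient φ x) (hess φ x) ≤ 0)

/-- (u1, u2) is a sub-super solution of the system (F1, F2) in Ω. -/
def SubSuper {n m₁ m₂ : ℕ} (Ω : Set (En n))
    (F1 : Fin m₁ → Op n m₁ m₂) (F2 : Fin m₂ → Op n m₁ m₂)
    (u1 : En n → Fin m₁ → ℝ) (u2 : En n → Fin m₂ → ℝ) : Prop :=
  BddOn Ω u1 ∧ BddOn Ω u2 ∧
  (∀ j, ∀ x ∈ Ω, ∀ φ : En n → ℝ, ContDiff ℝ 2 φ →
      TouchAbove Ω φ (uEnv Ω fun y => u1 y j) x →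
      F1 j x (fun i => uEnv Ω (fun y => u1 y i) x) (fun i => lEnv Ω (fun y => u2 y i) x)
          (gradient φ x) (hess φ x) ≤ 0) ∧
  (∀ j, ∀ x ∈ Ω, ∀ φ : En n → ℝ, ContDiff ℝ 2 φ →
      TouchBelow Ω φ (lEnv Ω fun y => u2 y j) x →
      0 ≤ F2 j x (fun i => uEnv Ω (fun y => u1 y i) x) (fun i => lEnv Ω (fun y => u2 y i) x)
            (gradient φ x) (hess φ x))

/-! At a point `x` where, say, `(u1_j)_*(x) ≤ (v1_j)_*(x)`, the lower envelope of `min u1_j v1_j`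
equals `(u1_j)_*` at `x` and lies below it on `Ω`, so a test function touching it from below at `x`
also touches `(u1_j)_*`. The super-solution inequality of `(u1, u2)` then passes to the envelopes of
`(min u1 v1, max u2 v2)` by quasi-monotonicity: the `r_i` only decrease with `r_j` unchanged, and the
`s_i` only increase. The sub-solution inequalities are dual. -/

section Envelopes

variable {n m : ℕ} {Ω : Set (En n)} {u v : En n → Fin m → ℝ}

lemma BddOn.min (hu : BddOn Ω u) (hv : BddOn Ω v) : BddOn Ω fun x i => min (u x i) (v x i) :=
  let ⟨M, hM⟩ := hu
  let ⟨M', hM'⟩ := hv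
  ⟨M ⊔ M', fun x hx i => abs_min_le_max_abs_abs.trans (max_le_max (hM x hx i) (hM' x hx i))⟩

lemma BddOn.max (hu : BddOn Ω u) (hv : BddOn Ω v) : BddOn Ω fun x i => max (u x i) (v x i) :=
  let ⟨M, hM⟩ := hu
  let ⟨M', hM'⟩ := hv
  ⟨M ⊔ M', fun x hx i => abs_max_le_max_abs_abs.trans (max_le_max (hM x hx i) (hM' x hx i))⟩

lemma BddOn.isBoundedUnder_le (hu : BddOn Ω u) (x : En n) (i : Fin m) :
    IsBoundedUnder (· ≤ ·) (𝓝[Ω] x) fun y => u y i :=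
  let ⟨M, hM⟩ := hu
  isBoundedUnder_of_eventually_le (a := M) <|
    eventually_mem_nhdsWithin.mono fun y hy => (abs_le.1 (hM y hy i)).2

lemma BddOn.isBoundedUnder_ge (hu : BddOn Ω u) (x : En n) (i : Fin m) :
    IsBoundedUnder (· ≥ ·) (𝓝[Ω] x) fun y => u y i :=
  let ⟨M, hM⟩ := hu
  isBoundedUnder_of_eventually_ge (a := -M) <|
    eventually_mem_nhdsWithin.mono fun y hy => (abs_le.1 (hM y hy i)).1

lemma lEnv_min (hu : BddOn Ω u) (hv : BddOn Ω v) {x : En n} (hx : x ∈ Ω) (i : Fin m) :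
    lEnv Ω (fun y => min (u y i) (v y i)) x
      = min (lEnv Ω (fun y => u y i) x) (lEnv Ω (fun y => v y i) x) := by
  have : (𝓝[Ω] x).NeBot := mem_closure_iff_nhdsWithin_neBot.mp (subset_closure hx)
  exact liminf_min (hu.isBoundedUnder_le x i).isCoboundedUnder_ge
    (hv.isBoundedUnder_le x i).isCoboundedUnder_ge
    (hu.isBoundedUnder_ge x i) (hv.isBoundedUnder_ge x i)

lemma uEnv_max (hu : BddOn Ω u) (hv : BddOn Ω v) {x : En n} (hx : x ∈ Ω) (i : Fin m) :
    uEnv Ω (fun y => max (u y i) (v y i)) x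
      = max (uEnv Ω (fun y => u y i) x) (uEnv Ω (fun y => v y i) x) := by
  have : (𝓝[Ω] x).NeBot := mem_closure_iff_nhdsWithin_neBot.mp (subset_closure hx)
  exact limsup_max (hu.isBoundedUnder_ge x i).isCoboundedUnder_le
    (hv.isBoundedUnder_ge x i).isCoboundedUnder_le
    (hu.isBoundedUnder_le x i) (hv.isBoundedUnder_le x i)

end Envelopes

section Touching

variable {n : ℕ} {Ω : Set (En n)} {φ f g : En n → ℝ} {x : En n}

lemma TouchBelow.of_le_of_eq (h : TouchBelow Ω φ f x) (hfg : ∀ y ∈ Ω, f y ≤ g y)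
    (hx : f x = g x) : TouchBelow Ω φ g x :=
  let ⟨hφx, N, hN, hxN, hlt⟩ := h
  ⟨hφx.trans hx, N, hN, hxN, fun y hy => (hlt y hy).trans_le (hfg y hy.1.2)⟩

lemma TouchAbove.of_le_of_eq (h : TouchAbove Ω φ f x) (hgf : ∀ y ∈ Ω, g y ≤ f y)
    (hx : f x = g x) : TouchAbove Ω φ g x :=
  let ⟨hφx, N, hN, hxN, hlt⟩ := h
  ⟨hφx.trans hx, N, hN, hxN, fun y hy => (hgf y hy.1.2).trans_lt (hlt y hy)⟩

end Touching

lemma hess_isSymm {n : ℕ} {φ : En n → ℝ} (hφ : ContDiff ℝ 2 φ) (x : En n) :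
    (hess φ x).IsSymm := by
  refine Matrix.IsSymm.ext fun i j => ?_
  simp only [hess, Matrix.of_apply, iteratedFDeriv_two_apply, Matrix.cons_val_zero,
    Matrix.cons_val_one]
  exact (hφ.contDiffAt.isSymmSndFDerivAt (by simp)) _ _

namespace SuperSub

variable {n m₁ m₂ : ℕ} {Ω : Set (En n)} {F1 : Fin m₁ → Op n m₁ m₂} {F2 : Fin m₂ → Op n m₁ m₂}
  {u1 v1 w1 : En n → Fin m₁ → ℝ} {u2 v2 w2 : En n → Fin m₂ → ℝ} {x : En n} {φ : En n → ℝ}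

lemma F1_nonneg_of_le (hQM : BalancedQM Ω F1 F2) (hu : SuperSub Ω F1 F2 u1 u2)
    (hw1 : ∀ i, ∀ y ∈ Ω, lEnv Ω (fun z => w1 z i) y ≤ lEnv Ω (fun z => u1 z i) y)
    (hw2 : ∀ i, uEnv Ω (fun z => u2 z i) x ≤ uEnv Ω (fun z => w2 z i) x)
    {j : Fin m₁} (hx : x ∈ Ω) (hφ : ContDiff ℝ 2 φ)
    (hj : lEnv Ω (fun z => w1 z j) x = lEnv Ω (fun z => u1 z j) x)
    (ht : TouchBelow Ω φ (lEnv Ω fun y => w1 y j) x) :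
    0 ≤ F1 j x (fun i => lEnv Ω (fun y => w1 y i) x) (fun i => uEnv Ω (fun y => w2 y i) x)
      (gradient φ x) (hess φ x) := by
  obtain ⟨qm1, qm2, -, -⟩ := hQM
  have hs := hess_isSymm hφ x
  calc 0 ≤ F1 j x (fun i => lEnv Ω (fun y => u1 y i) x) (fun i => uEnv Ω (fun y => u2 y i) x)
        (gradient φ x) (hess φ x) := hu.2.2.1 j x hx φ hφ (ht.of_le_of_eq (hw1 j) hj)
    _ ≤ F1 j x (fun i => lEnv Ω (fun y => u1 y i) x) (fun i => uEnv Ω (fun y => w2 y i) x)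
        (gradient φ x) (hess φ x) := qm1 j x hx _ _ _ _ _ hs hw2
    _ ≤ _ := qm2 j x hx _ _ _ _ _ hs (fun i => hw1 i x hx) hj

lemma F2_nonpos_of_le (hQM : BalancedQM Ω F1 F2) (hu : SuperSub Ω F1 F2 u1 u2)
    (hw1 : ∀ i, lEnv Ω (fun z => w1 z i) x ≤ lEnv Ω (fun z => u1 z i) x)
    (hw2 : ∀ i, ∀ y ∈ Ω, uEnv Ω (fun z => u2 z i) y ≤ uEnv Ω (fun z => w2 z i) y)
    {j : Fin m₂} (hx : x ∈ Ω) (hφ : ContDiff ℝ 2 φ)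
    (hj : uEnv Ω (fun z => w2 z j) x = uEnv Ω (fun z => u2 z j) x)
    (ht : TouchAbove Ω φ (uEnv Ω fun y => w2 y j) x) :
    F2 j x (fun i => lEnv Ω (fun y => w1 y i) x) (fun i => uEnv Ω (fun y => w2 y i) x)
      (gradient φ x) (hess φ x) ≤ 0 := by
  obtain ⟨-, -, qm3, qm4⟩ := hQM
  have hs := hess_isSymm hφ x
  calc _ ≤ F2 j x (fun i => lEnv Ω (fun y => w1 y i) x) (fun i => uEnv Ω (fun y => u2 y i) x)
        (gradient φ x) (hess φ x) := qm4 j x hx _ _ _ _ _ hs (fun i => hw2 i x hx) hj.symm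
    _ ≤ F2 j x (fun i => lEnv Ω (fun y => u1 y i) x) (fun i => uEnv Ω (fun y => u2 y i) x)
        (gradient φ x) (hess φ x) := qm3 j x hx _ _ _ _ _ hs hw1
    _ ≤ 0 := hu.2.2.2 j x hx φ hφ (ht.of_le_of_eq (hw2 j) hj)

lemma F1_min_max_nonneg (hQM : BalancedQM Ω F1 F2) (hu : SuperSub Ω F1 F2 u1 u2)
    (hv : SuperSub Ω F1 F2 v1 v2) {j : Fin m₁} (hx : x ∈ Ω) (hφ : ContDiff ℝ 2 φ)
    (ht : TouchBelow Ω φ (lEnv Ω fun y => min (u1 y j) (v1 y j)) x) :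
    0 ≤ F1 j x (fun i => lEnv Ω (fun y => min (u1 y i) (v1 y i)) x)
      (fun i => uEnv Ω (fun y => max (u2 y i) (v2 y i)) x) (gradient φ x) (hess φ x) := by
  have hmin := fun {y} (hy : y ∈ Ω) i => lEnv_min hu.1 hv.1 hy i
  have hmax := uEnv_max hu.2.1 hv.2.1 hx
  rcases le_total (lEnv Ω (fun y => u1 y j) x) (lEnv Ω (fun y => v1 y j) x) with h | h
  · exact hu.F1_nonneg_of_le hQM (fun i y hy => (hmin hy i).trans_le (min_le_left _ _))
      (fun i => (hmax i).symm ▸ le_max_left _ _) hx hφ ((hmin hx j).trans (min_eq_left h)) ht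
  · exact hv.F1_nonneg_of_le hQM (fun i y hy => (hmin hy i).trans_le (min_le_right _ _))
      (fun i => (hmax i).symm ▸ le_max_right _ _) hx hφ ((hmin hx j).trans (min_eq_right h)) ht

lemma F2_min_max_nonpos (hQM : BalancedQM Ω F1 F2) (hu : SuperSub Ω F1 F2 u1 u2)
    (hv : SuperSub Ω F1 F2 v1 v2) {j : Fin m₂} (hx : x ∈ Ω) (hφ : ContDiff ℝ 2 φ)
    (ht : TouchAbove Ω φ (uEnv Ω fun y => max (u2 y j) (v2 y j)) x) :
    F2 j x (fun i => lEnv Ω (fun y => min (u1 y i) (v1 y i)) x)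
      (fun i => uEnv Ω (fun y => max (u2 y i) (v2 y i)) x) (gradient φ x) (hess φ x) ≤ 0 := by
  have hmin := lEnv_min hu.1 hv.1 hx
  have hmax := fun {y} (hy : y ∈ Ω) i => uEnv_max hu.2.1 hv.2.1 hy i
  rcases le_total (uEnv Ω (fun y => v2 y j) x) (uEnv Ω (fun y => u2 y j) x) with h | h
  · exact hu.F2_nonpos_of_le hQM (fun i => (hmin i).symm ▸ min_le_left _ _)
      (fun i y hy => (le_max_left _ _).trans_eq (hmax hy i).symm) hx hφ
      ((hmax hx j).trans (max_eq_left h)) ht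
  · exact hv.F2_nonpos_of_le hQM (fun i => (hmin i).symm ▸ min_le_right _ _)
      (fun i y hy => (le_max_right _ _).trans_eq (hmax hy i).symm) hx hφ
      ((hmax hx j).trans (max_eq_right h)) ht

end SuperSub

theorem min_max_superSub_general {n m₁ m₂ : ℕ}
    (Ω : Set (En n))
    (F1 : Fin m₁ → Op n m₁ m₂) (F2 : Fin m₂ → Op n m₁ m₂)
    (hQM : BalancedQM Ω F1 F2)
    (u1 v1 : En n → Fin m₁ → ℝ) (u2 v2 : En n → Fin m₂ → ℝ)
    (hu : SuperSub Ω F1 F2 u1 u2) (hv : SuperSub Ω F1 F2 v1 v2) :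
    SuperSub Ω F1 F2 (fun x j => min (u1 x j) (v1 x j)) (fun x j => max (u2 x j) (v2 x j)) :=
  ⟨hu.1.min hv.1, hu.2.1.max hv.2.1,
    fun _ _ hx _ hφ ht => hu.F1_min_max_nonneg hQM hv hx hφ ht,
    fun _ _ hx _ hφ ht => hu.F2_min_max_nonpos hQM hv hx hφ ht⟩

/-- the componentwise (min, max) of two super-sub solutions of a degenerate
elliptic, balanced quasi-monotone system is again a super-sub solution. -/
theorem min_max_superSub {n m₁ m₂ : ℕ} (hm₁ : 1 ≤ m₁)
    (Ω : Set (En n)) (hΩo : IsOpen Ω) (hΩb : IsBounded Ω)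
    (F1 : Fin m₁ → Op n m₁ m₂) (F2 : Fin m₂ → Op n m₁ m₂)
    (hF1c : ∀ j, OpContinuousOn Ω (F1 j)) (hF2c : ∀ j, OpContinuousOn Ω (F2 j))
    (hF1e : ∀ j, DegElliptic Ω (F1 j)) (hF2e : ∀ j, DegElliptic Ω (F2 j))
    (hQM : BalancedQM Ω F1 F2)
    (u1 v1 : En n → Fin m₁ → ℝ) (u2 v2 : En n → Fin m₂ → ℝ)
    (hu : SuperSub Ω F1 F2 u1 u2) (hv : SuperSub Ω F1 F2 v1 v2) :
    SuperSub Ω F1 F2 (fun x j => min (u1 x j) (v1 x j)) (fun x j => max (u2 x j) (v2 x j)) :=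
  min_max_superSub_general Ω F1 F2 hQM u1 v1 u2 v2 hu hv
end
end

section
/- (Pasting lemma for super-sub solutions.) Let the system F_j(x,u(x),Du_j(x),D²u_j(x)) = 0, j = 1,…,m₁+m₂, be degenerate elliptic and balanced quasi-monotone. Let (u₁,u₂) be a bounded super-sub solution of the system in Ω, let x₀ ∈ Ω and δ > 0 with the closure of B(x₀,δ) contained in Ω, and let (v₁,v₂) be a bounded super-sub solution of the system in B(x₀,δ) such that (v₁,v₂) = (u₁,u₂) on B(x₀,δ) ∖ B(x₀,δ/2). Then the function equal to (v₁,v₂) in B(x₀,δ) and equal to (u₁,u₂) in Ω ∖ B(x₀,δ) is a super-sub solution of the system in Ω. -/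
open Filter Topology Matrix Bornology

noncomputable section

/-- If `f = g` on an open set `S` containing `x`, then the lower envelopes agree at `x`. -/
lemma lEnv_congr' {n : ℕ} {Ω S : Set (En n)} {f g : En n → ℝ} {x : En n}
    (hS : IsOpen S) (hx : x ∈ S) (h : ∀ y ∈ S, y ∈ Ω → f y = g y) :
    lEnv Ω f x = lEnv Ω g x := by
  refine Filter.liminf_congr ?_
  filter_upwards [(hS.eventually_mem hx).filter_mono nhdsWithin_le_nhds,
    self_mem_nhdsWithin] with y h1 h2
  exact h y h1 h2

/-- If `f = g` on an open set `S` containing `x`, then the upper envelopes agree at `x`. -/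
lemma uEnv_congr' {n : ℕ} {Ω S : Set (En n)} {f g : En n → ℝ} {x : En n}
    (hS : IsOpen S) (hx : x ∈ S) (h : ∀ y ∈ S, y ∈ Ω → f y = g y) :
    uEnv Ω f x = uEnv Ω g x := by
  refine Filter.limsup_congr ?_
  filter_upwards [(hS.eventually_mem hx).filter_mono nhdsWithin_le_nhds,
    self_mem_nhdsWithin] with y h1 h2
  exact h y h1 h2

lemma nhdsWithin_eq_of_open_subset {n : ℕ} {Ω U : Set (En n)} {x : En n}
    (hU : IsOpen U) (hUΩ : U ⊆ Ω) (hx : x ∈ U) : 𝓝[Ω] x = 𝓝[U] x := by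
  rw [nhdsWithin_restrict' Ω (hU.mem_nhds hx), Set.inter_eq_right.mpr hUΩ]

lemma lEnv_restrict {n : ℕ} {Ω U : Set (En n)} (f : En n → ℝ) {x : En n}
    (hU : IsOpen U) (hUΩ : U ⊆ Ω) (hx : x ∈ U) : lEnv Ω f x = lEnv U f x := by
  unfold lEnv; rw [nhdsWithin_eq_of_open_subset hU hUΩ hx]

lemma uEnv_restrict {n : ℕ} {Ω U : Set (En n)} (f : En n → ℝ) {x : En n}
    (hU : IsOpen U) (hUΩ : U ⊆ Ω) (hx : x ∈ U) : uEnv Ω f x = uEnv U f x := by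
  unfold uEnv; rw [nhdsWithin_eq_of_open_subset hU hUΩ hx]

open scoped Classical in
/-- Pasting lemma for super-sub solutions: if (u1, u2) is a bounded
super-sub solution in Ω, B(x₀,δ) has closure contained in Ω, and (v1, v2) is a bounded
super-sub solution in B(x₀,δ) agreeing with (u1, u2) on B(x₀,δ) ∖ B(x₀,δ/2), then the
function equal to (v1, v2) in B(x₀,δ) and equal to (u1, u2) outside is a super-sub
solution in Ω. -/
theorem pasting_superSub {n m₁ m₂ : ℕ} (hm₁ : 1 ≤ m₁)
    (Ω : Set (En n)) (hΩo : IsOpen Ω) (hΩb : IsBounded Ω)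
    (F1 : Fin m₁ → Op n m₁ m₂) (F2 : Fin m₂ → Op n m₁ m₂)
    (hF1c : ∀ j, OpContinuousOn Ω (F1 j)) (hF2c : ∀ j, OpContinuousOn Ω (F2 j))
    (hF1e : ∀ j, DegElliptic Ω (F1 j)) (hF2e : ∀ j, DegElliptic Ω (F2 j))
    (hQM : BalancedQM Ω F1 F2)
    (u1 v1 : En n → Fin m₁ → ℝ) (u2 v2 : En n → Fin m₂ → ℝ)
    (x₀ : En n) (δ : ℝ) (hδ : 0 < δ)
    (hball : Metric.closedBall x₀ δ ⊆ Ω)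
    (hu : SuperSub Ω F1 F2 u1 u2)
    (hv : SuperSub (Metric.ball x₀ δ) F1 F2 v1 v2)
    (hagree : ∀ x ∈ Metric.ball x₀ δ \ Metric.ball x₀ (δ / 2), v1 x = u1 x ∧ v2 x = u2 x) :
    SuperSub Ω F1 F2 (fun x => if x ∈ Metric.ball x₀ δ then v1 x else u1 x)
      (fun x => if x ∈ Metric.ball x₀ δ then v2 x else u2 x) := by
  classical
  have hBo : IsOpen (Metric.ball x₀ δ) := Metric.isOpen_ball
  have hBΩ : Metric.ball x₀ δ ⊆ Ω := Metric.ball_subset_closedBall.trans hball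
  set B := Metric.ball x₀ δ with hBdef
  -- the pasted functions agree with (u1,u2) away from the small ball
  have hw1u : ∀ y : En n, δ / 2 ≤ dist y x₀ →
      (if y ∈ B then v1 y else u1 y) = u1 y := by
    intro y hy
    by_cases h : y ∈ B
    · rw [if_pos h]
      exact (hagree y ⟨h, by simp [Metric.mem_ball, not_lt, hy]⟩).1
    · rw [if_neg h]
  have hw2u : ∀ y : En n, δ / 2 ≤ dist y x₀ →
      (if y ∈ B then v2 y else u2 y) = u2 y := by
    intro y hy
    by_cases h : y ∈ B
    · rw [if_pos h]
      exact (hagree y ⟨h, by simp [Metric.mem_ball, not_lt, hy]⟩).2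
    · rw [if_neg h]
  -- envelope identities inside the ball
  have keyA1 : ∀ x ∈ B, ∀ i, lEnv Ω (fun y => (if y ∈ B then v1 y else u1 y) i) x
      = lEnv B (fun y => v1 y i) x := by
    intro x hx i
    rw [lEnv_congr' (g := fun y => v1 y i) hBo hx (fun y hyB _ => by rw [if_pos hyB]),
      lEnv_restrict _ hBo hBΩ hx]
  have keyA2 : ∀ x ∈ B, ∀ i, uEnv Ω (fun y => (if y ∈ B then v2 y else u2 y) i) x
      = uEnv B (fun y => v2 y i) x := by
    intro x hx i
    rw [uEnv_congr' (g := fun y => v2 y i) hBo hx (fun y hyB _ => by rw [if_pos hyB]),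
      uEnv_restrict _ hBo hBΩ hx]
  -- points of the small ball around far points are far from x₀
  have hfar : ∀ x : En n, δ ≤ dist x x₀ → ∀ y ∈ Metric.ball x (δ / 2),
      δ / 2 ≤ dist y x₀ := by
    intro x hx y hy
    have h1 : dist y x < δ / 2 := Metric.mem_ball.mp hy
    have h2 : dist x x₀ ≤ dist x y + dist y x₀ := dist_triangle _ _ _
    have h3 : dist x y = dist y x := dist_comm _ _
    linarith
  -- envelope identities away from the ball
  have keyB1 : ∀ x : En n, δ ≤ dist x x₀ → ∀ x' ∈ Metric.ball x (δ / 2), ∀ i,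
      lEnv Ω (fun y => (if y ∈ B then v1 y else u1 y) i) x'
        = lEnv Ω (fun y => u1 y i) x' := by
    intro x hx x' hx' i
    exact lEnv_congr' Metric.isOpen_ball hx'
      (fun y hy _ => by rw [hw1u y (hfar x hx y hy)])
  have keyB2 : ∀ x : En n, δ ≤ dist x x₀ → ∀ x' ∈ Metric.ball x (δ / 2), ∀ i,
      uEnv Ω (fun y => (if y ∈ B then v2 y else u2 y) i) x'
        = uEnv Ω (fun y => u2 y i) x' := by
    intro x hx x' hx' i
    exact uEnv_congr' Metric.isOpen_ball hx'
      (fun y hy _ => by rw [hw2u y (hfar x hx y hy)])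
  obtain ⟨⟨M1, hM1⟩, ⟨M2, hM2⟩, hu1cond, hu2cond⟩ := hu
  obtain ⟨⟨N1, hN1⟩, ⟨N2, hN2⟩, hv1cond, hv2cond⟩ := hv
  refine ⟨⟨max M1 N1, fun x hx i => ?_⟩, ⟨max M2 N2, fun x hx i => ?_⟩, ?_, ?_⟩
  · by_cases h : x ∈ B
    · simp only [if_pos h]; exact le_trans (hN1 x h i) (le_max_right _ _)
    · simp only [if_neg h]; exact le_trans (hM1 x hx i) (le_max_left _ _)
  · by_cases h : x ∈ B
    · simp only [if_pos h]; exact le_trans (hN2 x h i) (le_max_right _ _)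
    · simp only [if_neg h]; exact le_trans (hM2 x hx i) (le_max_left _ _)
  · -- the F1 (supersolution) condition
    intro j x hxΩ φ hφ htch
    obtain ⟨heq, N, hNo, hxN, hlt⟩ := htch
    by_cases hxB : x ∈ B
    · have e1 : (fun i => lEnv Ω (fun y => (if y ∈ B then v1 y else u1 y) i) x)
          = fun i => lEnv B (fun y => v1 y i) x := funext fun i => keyA1 x hxB i
      have e2 : (fun i => uEnv Ω (fun y => (if y ∈ B then v2 y else u2 y) i) x)
          = fun i => uEnv B (fun y => v2 y i) x := funext fun i => keyA2 x hxB i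
      show 0 ≤ F1 j x (fun i => lEnv Ω (fun y => (if y ∈ B then v1 y else u1 y) i) x)
        (fun i => uEnv Ω (fun y => (if y ∈ B then v2 y else u2 y) i) x)
        (gradient φ x) (hess φ x)
      rw [e1, e2]
      refine hv1cond j x hxB φ hφ ?_
      refine ⟨heq.trans (keyA1 x hxB j), N ∩ B, hNo.inter hBo, ⟨hxN, hxB⟩, ?_⟩
      rintro y ⟨⟨⟨hyN, hyB⟩, -⟩, hyne⟩
      exact (hlt y ⟨⟨hyN, hBΩ hyB⟩, hyne⟩).trans_eq (keyA1 y hyB j)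
    · have hxd : δ ≤ dist x x₀ := by
        simpa [hBdef, Metric.mem_ball, not_lt] using hxB
      have hxself : x ∈ Metric.ball x (δ / 2) := Metric.mem_ball_self (by linarith)
      have e1 : (fun i => lEnv Ω (fun y => (if y ∈ B then v1 y else u1 y) i) x)
          = fun i => lEnv Ω (fun y => u1 y i) x :=
        funext fun i => keyB1 x hxd x hxself i
      have e2 : (fun i => uEnv Ω (fun y => (if y ∈ B then v2 y else u2 y) i) x)
          = fun i => uEnv Ω (fun y => u2 y i) x :=
        funext fun i => keyB2 x hxd x hxself i
      show 0 ≤ F1 j x (fun i => lEnv Ω (fun y => (if y ∈ B then v1 y else u1 y) i) x)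
        (fun i => uEnv Ω (fun y => (if y ∈ B then v2 y else u2 y) i) x)
        (gradient φ x) (hess φ x)
      rw [e1, e2]
      refine hu1cond j x hxΩ φ hφ ?_
      refine ⟨heq.trans (keyB1 x hxd x hxself j), N ∩ Metric.ball x (δ / 2),
        hNo.inter Metric.isOpen_ball, ⟨hxN, hxself⟩, ?_⟩
      rintro y ⟨⟨⟨hyN, hyb⟩, hyΩ⟩, hyne⟩
      exact (hlt y ⟨⟨hyN, hyΩ⟩, hyne⟩).trans_eq (keyB1 x hxd y hyb j)
  · -- the F2 (subsolution) condition
    intro j x hxΩ φ hφ htch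
    obtain ⟨heq, N, hNo, hxN, hlt⟩ := htch
    by_cases hxB : x ∈ B
    · have e1 : (fun i => lEnv Ω (fun y => (if y ∈ B then v1 y else u1 y) i) x)
          = fun i => lEnv B (fun y => v1 y i) x := funext fun i => keyA1 x hxB i
      have e2 : (fun i => uEnv Ω (fun y => (if y ∈ B then v2 y else u2 y) i) x)
          = fun i => uEnv B (fun y => v2 y i) x := funext fun i => keyA2 x hxB i
      show F2 j x (fun i => lEnv Ω (fun y => (if y ∈ B then v1 y else u1 y) i) x)
        (fun i => uEnv Ω (fun y => (if y ∈ B then v2 y else u2 y) i) x)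
        (gradient φ x) (hess φ x) ≤ 0
      rw [e1, e2]
      refine hv2cond j x hxB φ hφ ?_
      refine ⟨heq.trans (keyA2 x hxB j), N ∩ B, hNo.inter hBo, ⟨hxN, hxB⟩, ?_⟩
      rintro y ⟨⟨⟨hyN, hyB⟩, -⟩, hyne⟩
      exact (keyA2 y hyB j).symm.trans_lt (hlt y ⟨⟨hyN, hBΩ hyB⟩, hyne⟩)
    · have hxd : δ ≤ dist x x₀ := by
        simpa [hBdef, Metric.mem_ball, not_lt] using hxB
      have hxself : x ∈ Metric.ball x (δ / 2) := Metric.mem_ball_self (by linarith)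
      have e1 : (fun i => lEnv Ω (fun y => (if y ∈ B then v1 y else u1 y) i) x)
          = fun i => lEnv Ω (fun y => u1 y i) x :=
        funext fun i => keyB1 x hxd x hxself i
      have e2 : (fun i => uEnv Ω (fun y => (if y ∈ B then v2 y else u2 y) i) x)
          = fun i => uEnv Ω (fun y => u2 y i) x :=
        funext fun i => keyB2 x hxd x hxself i
      show F2 j x (fun i => lEnv Ω (fun y => (if y ∈ B then v1 y else u1 y) i) x)
        (fun i => uEnv Ω (fun y => (if y ∈ B then v2 y else u2 y) i) x)
        (gradient φ x) (hess φ x) ≤ 0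
      rw [e1, e2]
      refine hu2cond j x hxΩ φ hφ ?_
      refine ⟨heq.trans (keyB2 x hxd x hxself j), N ∩ Metric.ball x (δ / 2),
        hNo.inter Metric.isOpen_ball, ⟨hxN, hxself⟩, ?_⟩
      rintro y ⟨⟨⟨hyN, hyb⟩, hyΩ⟩, hyne⟩
      exact (keyB2 x hxd y hyb j).symm.trans_lt (hlt y ⟨⟨hyN, hyΩ⟩, hyne⟩)
end
end

section
/- Let ū ∈ C²(Ω) ∩ C(closure of Ω) satisfy −Δū + λū − f = 0 in Ω with ū = 0 on ∂Ω, and let v̲ ∈ C²(Ω) ∩ C(closure of Ω) satisfy −Δv̲ + λv̲ + β·max(ū,v̲) − g = 0 in Ω with v̲ = 0 on ∂Ω. Then (ū, v̲) is a super-sub solution of the competitive system −Δu + λu + α·max(u,v) − f = 0, −Δv + λv + β·max(u,v) − g = 0 in Ω. -/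
open Filter Topology Matrix Bornology

noncomputable section

/-- (u, v) is a super-sub solution of the competitive system
-Δu + λu + α max(u,v) - f = 0, -Δv + λv + β max(u,v) - g = 0 in Ω. -/
def CompSuperSub {n : ℕ} (Ω : Set (En n)) (lam al be : ℝ) (f g : En n → ℝ)
    (u v : En n → ℝ) : Prop :=
  (∃ M : ℝ, ∀ x ∈ Ω, |u x| ≤ M ∧ |v x| ≤ M) ∧
  (∀ x ∈ Ω, ∀ φ : En n → ℝ, ContDiff ℝ 2 φ → TouchBelow Ω φ (lEnv Ω u) x →
    0 ≤ -(hess φ x).trace + lam * lEnv Ω u x + al * max (lEnv Ω u x) (uEnv Ω v x) - f x) ∧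
  (∀ x ∈ Ω, ∀ φ : En n → ℝ, ContDiff ℝ 2 φ → TouchAbove Ω φ (uEnv Ω v) x →
    -(hess φ x).trace + lam * uEnv Ω v x + be * max (lEnv Ω u x) (uEnv Ω v x) - g x ≤ 0)

/-- (u, v) is a sub-super solution of the competitive system
-Δu + λu + α max(u,v) - f = 0, -Δv + λv + β max(u,v) - g = 0 in Ω. -/
def CompSubSuper {n : ℕ} (Ω : Set (En n)) (lam al be : ℝ) (f g : En n → ℝ)
    (u v : En n → ℝ) : Prop :=
  (∃ M : ℝ, ∀ x ∈ Ω, |u x| ≤ M ∧ |v x| ≤ M) ∧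
  (∀ x ∈ Ω, ∀ φ : En n → ℝ, ContDiff ℝ 2 φ → TouchAbove Ω φ (uEnv Ω u) x →
    -(hess φ x).trace + lam * uEnv Ω u x + al * max (uEnv Ω u x) (lEnv Ω v x) - f x ≤ 0) ∧
  (∀ x ∈ Ω, ∀ φ : En n → ℝ, ContDiff ℝ 2 φ → TouchBelow Ω φ (lEnv Ω v) x →
    0 ≤ -(hess φ x).trace + lam * lEnv Ω v x + be * max (uEnv Ω u x) (lEnv Ω v x) - g x)

lemma aux_second_deriv_nonneg (ψ ψ' : ℝ → ℝ) (c δ : ℝ) (hδ : 0 < δ)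
    (hd : ∀ t : ℝ, |t| < δ → HasDerivAt ψ (ψ' t) t)
    (hd2 : HasDerivAt ψ' c 0)
    (hmin : ∀ t : ℝ, |t| < δ → ψ 0 ≤ ψ t) : 0 ≤ c := by
  by_contra hc
  push_neg at hc
  have hloc : IsLocalMin ψ 0 := by
    have hmem : Set.Ioo (-δ) δ ∈ 𝓝 (0:ℝ) := Ioo_mem_nhds (by linarith) hδ
    exact Filter.eventually_of_mem hmem fun t ht => hmin t (abs_lt.mpr ⟨ht.1, ht.2⟩)
  have hψ'0 : ψ' 0 = 0 := hloc.hasDerivAt_eq_zero (hd 0 (by simpa using hδ))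
  have hslope := hasDerivAt_iff_tendsto_slope.mp hd2
  have h1 : ∀ᶠ t in 𝓝[≠] (0:ℝ), slope ψ' 0 t < c/2 :=
    hslope.eventually_lt_const (by linarith)
  have h2 : ∀ᶠ t in 𝓝[>] (0:ℝ), slope ψ' 0 t < c/2 :=
    h1.filter_mono (nhdsWithin_mono 0 fun t ht => ne_of_gt ht)
  rw [eventually_nhdsWithin_iff] at h2
  obtain ⟨ε, hε, hεball⟩ := Metric.eventually_nhds_iff.mp h2
  set b := min ε δ / 2 with hb
  have hb0 : 0 < b := by positivity
  have hbδ : b < δ := by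
    have h : b ≤ δ / 2 := by rw [hb]; gcongr; exact min_le_right _ _
    linarith
  have hneg : ∀ t ∈ Set.Ioo (0:ℝ) b, ψ' t < 0 := by
    intro t ht
    have htb : dist t 0 < ε := by
      rw [Real.dist_eq, sub_zero, abs_of_pos ht.1]
      have h : b ≤ ε / 2 := by rw [hb]; gcongr; exact min_le_left _ _
      linarith [ht.2]
    have hs := hεball htb (Set.mem_Ioi.mpr ht.1)
    rw [slope_def_field, hψ'0, sub_zero, sub_zero] at hs
    have h5 := (div_lt_iff₀ ht.1).mp hs
    nlinarith [ht.1]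
  have hanti : StrictAntiOn ψ (Set.Icc 0 b) := by
    apply strictAntiOn_of_deriv_neg (convex_Icc 0 b)
    · intro t ht
      have : |t| < δ := by
        rw [abs_of_nonneg ht.1]; exact lt_of_le_of_lt ht.2 hbδ
      exact ((hd t this).continuousAt).continuousWithinAt
    · intro t ht
      rw [interior_Icc] at ht
      rw [(hd t (by rw [abs_of_pos ht.1]; linarith [ht.2])).deriv]
      exact hneg t ht
  have := hanti (Set.left_mem_Icc.mpr hb0.le) (Set.right_mem_Icc.mpr hb0.le) hb0
  have := hmin b (by rw [abs_of_pos hb0]; exact hbδ)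
  linarith

lemma aux_dir_nonneg {n : ℕ} (w : En n → ℝ) (x : En n) (hw : ContDiffAt ℝ 2 w x)
    (hmin : ∀ᶠ y in 𝓝 x, w x ≤ w y) (e : En n) :
    0 ≤ fderiv ℝ (fderiv ℝ w) x e e := by
  rcases eq_or_ne e 0 with rfl | he
  · simp
  have hev : ∀ᶠ y in 𝓝 x, HasFDerivAt w (fderiv ℝ w y) y := by
    filter_upwards [hw.eventually (by simp)] with y hy
    exact (hy.differentiableAt (by norm_num)).hasFDerivAt
  obtain ⟨δ, hδ, hball⟩ := Metric.eventually_nhds_iff.mp (hev.and hmin)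
  have hL : ∀ t : ℝ, HasDerivAt (fun s : ℝ => x + s • e) e t := by
    intro t
    simpa using ((hasDerivAt_id t).smul_const e).const_add x
  have hne : 0 < ‖e‖ := norm_pos_iff.mpr he
  have hδ' : 0 < δ / ‖e‖ := div_pos hδ hne
  have hdist : ∀ t : ℝ, |t| < δ / ‖e‖ → dist (x + t • e) x < δ := by
    intro t ht
    rw [dist_eq_norm, add_sub_cancel_left, norm_smul, Real.norm_eq_abs]
    exact (lt_div_iff₀ hne).mp ht
  have hψ : ∀ t : ℝ, |t| < δ / ‖e‖ →
      HasDerivAt (fun s => w (x + s • e)) (fderiv ℝ w (x + t • e) e) t := by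
    intro t ht
    exact (hball (hdist t ht)).1.comp_hasDerivAt t (hL t)
  have hd2' : DifferentiableAt ℝ (fderiv ℝ w) x :=
    (hw.fderiv_right (m := 1) (by norm_num)).differentiableAt (by norm_num)
  have hg : HasDerivAt (fun t : ℝ => fderiv ℝ w (x + t • e))
      (fderiv ℝ (fderiv ℝ w) x e) 0 := by
    have hF : HasFDerivAt (fderiv ℝ w) (fderiv ℝ (fderiv ℝ w) x) (x + (0:ℝ) • e) := by
      simpa using hd2'.hasFDerivAt
    exact hF.comp_hasDerivAt 0 (hL 0)
  have hψ' : HasDerivAt (fun t : ℝ => fderiv ℝ w (x + t • e) e)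
      (fderiv ℝ (fderiv ℝ w) x e e) 0 := by
    simpa using hg.clm_apply (hasDerivAt_const 0 e)
  apply aux_second_deriv_nonneg (fun s => w (x + s • e)) (fun t => fderiv ℝ w (x + t • e) e)
    _ _ hδ' hψ hψ'
  intro t ht
  simpa using (hball (hdist t ht)).2

lemma hess_trace_eq {n : ℕ} (w : En n → ℝ) (x : En n) :
    (hess w x).trace = ∑ i, fderiv ℝ (fderiv ℝ w) x
      (EuclideanSpace.single i 1) (EuclideanSpace.single i 1) := by
  simp [Matrix.trace, Matrix.diag, hess, iteratedFDeriv_two_apply]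

lemma aux_trace_nonneg {n : ℕ} (w : En n → ℝ) (x : En n) (hw : ContDiffAt ℝ 2 w x)
    (hmin : ∀ᶠ y in 𝓝 x, w x ≤ w y) : 0 ≤ (hess w x).trace := by
  rw [hess_trace_eq]
  exact Finset.sum_nonneg fun i _ => aux_dir_nonneg w x hw hmin _

lemma aux_trace_sub {n : ℕ} (a b : En n → ℝ) (x : En n)
    (ha : ContDiffAt ℝ 2 a x) (hb : ContDiffAt ℝ 2 b x) :
    (hess (fun y => a y - b y) x).trace = (hess a x).trace - (hess b x).trace := by
  have hsub : fderiv ℝ (fderiv ℝ (fun y => a y - b y)) x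
      = fderiv ℝ (fderiv ℝ a) x - fderiv ℝ (fderiv ℝ b) x := by
    have hev : (fderiv ℝ (fun y => a y - b y)) =ᶠ[𝓝 x]
        fun y => fderiv ℝ a y - fderiv ℝ b y := by
      filter_upwards [ha.eventually (by simp), hb.eventually (by simp)] with y hay hby
      exact fderiv_sub (hay.differentiableAt (by norm_num))
        (hby.differentiableAt (by norm_num))
    rw [hev.fderiv_eq]
    exact fderiv_sub ((ha.fderiv_right (m := 1) (by norm_num)).differentiableAt (by norm_num))
      ((hb.fderiv_right (m := 1) (by norm_num)).differentiableAt (by norm_num))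
  rw [hess_trace_eq, hess_trace_eq, hess_trace_eq, hsub, ← Finset.sum_sub_distrib]
  simp [ContinuousLinearMap.sub_apply]

lemma env_eq_self {n : ℕ} {Ω : Set (En n)} (hΩo : IsOpen Ω) {u : En n → ℝ} {x : En n}
    (hx : x ∈ Ω) (hu : ContinuousAt u x) :
    liminf u (𝓝[Ω] x) = u x ∧ limsup u (𝓝[Ω] x) = u x := by
  have hn : 𝓝[Ω] x = 𝓝 x := nhdsWithin_eq_nhds.mpr (hΩo.mem_nhds hx)
  rw [hn]
  exact ⟨hu.tendsto.liminf_eq, hu.tendsto.limsup_eq⟩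

/-- if ū ∈ C²(Ω) ∩ C(cl Ω) solves -Δū + λū - f = 0 in Ω with ū = 0 on ∂Ω,
and v̲ ∈ C²(Ω) ∩ C(cl Ω) solves -Δv̲ + λv̲ + β max(ū,v̲) - g = 0 in Ω with v̲ = 0 on ∂Ω,
then (ū, v̲) is a super-sub solution of the competitive system. -/
theorem ubar_vlow_superSub {n : ℕ}
    (Ω : Set (En n)) (hΩo : IsOpen Ω) (hΩb : IsBounded Ω)
    (lam al be : ℝ) (hlam : 0 < lam) (hal : 0 < al) (hbe : 0 < be)
    (f g : En n → ℝ)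
    (hf : ContDiffOn ℝ (⊤ : ℕ∞) f (closure Ω)) (hg : ContDiffOn ℝ (⊤ : ℕ∞) g (closure Ω))
    (hf0 : ∀ x ∈ closure Ω, 0 ≤ f x) (hg0 : ∀ x ∈ closure Ω, 0 ≤ g x)
    (ubar vlow : En n → ℝ)
    (hubar : ContDiffOn ℝ 2 ubar Ω) (hubarc : ContinuousOn ubar (closure Ω))
    (hvlow : ContDiffOn ℝ 2 vlow Ω) (hvlowc : ContinuousOn vlow (closure Ω))
    (hubar_eq : ∀ x ∈ Ω, -(hess ubar x).trace + lam * ubar x - f x = 0)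
    (hubar_bd : ∀ x ∈ frontier Ω, ubar x = 0)
    (hvlow_eq : ∀ x ∈ Ω,
      -(hess vlow x).trace + lam * vlow x + be * max (ubar x) (vlow x) - g x = 0)
    (hvlow_bd : ∀ x ∈ frontier Ω, vlow x = 0) :
    CompSuperSub Ω lam al be f g ubar vlow := by
  have hK : IsCompact (closure Ω) :=
    Metric.isCompact_of_isClosed_isBounded isClosed_closure hΩb.closure
  have hub_at : ∀ x ∈ Ω, ContDiffAt ℝ 2 ubar x :=
    fun x hx => hubar.contDiffAt (hΩo.mem_nhds hx)
  have hvl_at : ∀ x ∈ Ω, ContDiffAt ℝ 2 vlow x :=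
    fun x hx => hvlow.contDiffAt (hΩo.mem_nhds hx)
  have henvu : ∀ x ∈ Ω, lEnv Ω ubar x = ubar x ∧ uEnv Ω ubar x = ubar x :=
    fun x hx => env_eq_self hΩo hx (hub_at x hx).continuousAt
  have henvv : ∀ x ∈ Ω, lEnv Ω vlow x = vlow x ∧ uEnv Ω vlow x = vlow x :=
    fun x hx => env_eq_self hΩo hx (hvl_at x hx).continuousAt
  have hub0 : ∀ x ∈ Ω, 0 ≤ ubar x := by
    intro x hx
    by_contra hneg
    push_neg at hneg
    obtain ⟨x₀, hx₀K, hmin⟩ := hK.exists_isMinOn ⟨x, subset_closure hx⟩ hubarc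
    have hmin' := isMinOn_iff.mp hmin
    have hx₀neg : ubar x₀ < 0 := lt_of_le_of_lt (hmin' x (subset_closure hx)) hneg
    have hx₀Ω : x₀ ∈ Ω := by
      by_contra h
      have hfr : x₀ ∈ frontier Ω := ⟨hx₀K, by rwa [hΩo.interior_eq]⟩
      rw [hubar_bd x₀ hfr] at hx₀neg
      exact lt_irrefl _ hx₀neg
    have htr : 0 ≤ (hess ubar x₀).trace := by
      apply aux_trace_nonneg _ _ (hub_at x₀ hx₀Ω)
      filter_upwards [hΩo.mem_nhds hx₀Ω] with y hy
      exact hmin' y (subset_closure hy)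
    have heq := hubar_eq x₀ hx₀Ω
    have hf0' := hf0 x₀ (subset_closure hx₀Ω)
    linarith [mul_neg_of_pos_of_neg hlam hx₀neg]
  refine ⟨?_, ?_, ?_⟩
  · obtain ⟨C1, hC1⟩ := hK.exists_bound_of_continuousOn hubarc
    obtain ⟨C2, hC2⟩ := hK.exists_bound_of_continuousOn hvlowc
    refine ⟨max C1 C2, fun x hx => ⟨?_, ?_⟩⟩
    · exact le_trans (by simpa [Real.norm_eq_abs] using hC1 x (subset_closure hx))
        (le_max_left _ _)
    · exact le_trans (by simpa [Real.norm_eq_abs] using hC2 x (subset_closure hx))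
        (le_max_right _ _)
  · rintro x hx φ hφ ⟨hφx, N, hNo, hxN, hlt⟩
    rw [(henvu x hx).1] at hφx ⊢
    rw [(henvv x hx).2]
    have hmin : ∀ᶠ y in 𝓝 x, (fun y => ubar y - φ y) x ≤ (fun y => ubar y - φ y) y := by
      filter_upwards [(hNo.inter hΩo).mem_nhds ⟨hxN, hx⟩] with y hy
      show ubar x - φ x ≤ ubar y - φ y
      rcases eq_or_ne y x with rfl | hne
      · exact le_refl _
      · have hl := hlt y ⟨hy, by simpa using hne⟩
        rw [(henvu y hy.2).1] at hl
        linarith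
    have htr := aux_trace_nonneg _ x ((hub_at x hx).sub hφ.contDiffAt) hmin
    rw [aux_trace_sub ubar φ x (hub_at x hx) hφ.contDiffAt] at htr
    have heq := hubar_eq x hx
    have hmax : 0 ≤ max (ubar x) (vlow x) := le_trans (hub0 x hx) (le_max_left _ _)
    nlinarith [mul_nonneg hal.le hmax]
  · rintro x hx φ hφ ⟨hφx, N, hNo, hxN, hlt⟩
    rw [(henvv x hx).2] at hφx ⊢
    rw [(henvu x hx).1]
    have hmin : ∀ᶠ y in 𝓝 x, (fun y => φ y - vlow y) x ≤ (fun y => φ y - vlow y) y := by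
      filter_upwards [(hNo.inter hΩo).mem_nhds ⟨hxN, hx⟩] with y hy
      show φ x - vlow x ≤ φ y - vlow y
      rcases eq_or_ne y x with rfl | hne
      · exact le_refl _
      · have hl := hlt y ⟨hy, by simpa using hne⟩
        rw [(henvv y hy.2).2] at hl
        linarith
    have htr := aux_trace_nonneg _ x (hφ.contDiffAt.sub (hvl_at x hx)) hmin
    rw [aux_trace_sub φ vlow x hφ.contDiffAt (hvl_at x hx)] at htr
    have heq := hvlow_eq x hx
    linarith
end
end

section
/- Let ū, v̄, u̲, v̲ ∈ C²(Ω) ∩ C(closure of Ω) all vanish on ∂Ω and satisfy in Ω: −Δū + λū − f = 0; −Δv̲ + λv̲ + β·max(ū,v̲) − g = 0; −Δv̄ + λv̄ − g = 0; −Δu̲ + λu̲ + α·max(u̲,v̄) − f = 0. Then ū ≥ 0 and v̄ ≥ 0 in Ω, and moreover ū ≥ u̲ and v̄ ≥ v̲ in Ω. -/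
open Filter Topology Matrix Bornology

noncomputable section

/-- 1-D second derivative test at a local min. -/
lemma aux_second_deriv_nonneg_s13 {g h : ℝ → ℝ} {a : ℝ}
    (hg : ∀ᶠ t in 𝓝 (0:ℝ), HasDerivAt g (h t) t)
    (hh : HasDerivAt h a 0) (hmin : IsLocalMin g 0) : 0 ≤ a := by
  by_contra hlt
  push_neg at hlt
  have h0 : h 0 = 0 := hmin.hasDerivAt_eq_zero hg.self_of_nhds
  have hsmall : ∀ᶠ t in 𝓝 (0:ℝ), ‖h t - h 0 - (t - 0) * a‖ ≤ (-a/2) * ‖t - 0‖ := by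
    have := hasDerivAt_iff_isLittleO.1 hh
    exact this.bound (by linarith)
  have key : ∀ᶠ t in 𝓝 (0:ℝ), (0 < t → h t < 0) ∧ HasDerivAt g (h t) t ∧ g 0 ≤ g t := by
    have hminev : ∀ᶠ t in 𝓝 (0:ℝ), g 0 ≤ g t := hmin
    filter_upwards [hsmall, hg, hminev] with t h1 h2 h3
    refine ⟨fun ht => ?_, h2, h3⟩
    rw [h0] at h1
    simp only [sub_zero] at h1
    have : |h t - t * a| ≤ (-a/2) * |t| := by simpa [Real.norm_eq_abs] using h1
    have := abs_le.1 this
    rw [abs_of_pos ht] at this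
    nlinarith [this.2]
  obtain ⟨δ, hδ, hδprop⟩ := Metric.eventually_nhds_iff_ball.1 key
  set b := δ/2 with hb
  have hbδ : ∀ t ∈ Set.Icc (0:ℝ) b, t ∈ Metric.ball (0:ℝ) δ := by
    intro t ht
    simp only [Metric.mem_ball, Real.dist_eq, sub_zero]
    rw [abs_of_nonneg ht.1]; linarith [ht.2]
  have hcont : ContinuousOn g (Set.Icc 0 b) := fun t ht =>
    ((hδprop t (hbδ t ht)).2.1.continuousAt).continuousWithinAt
  obtain ⟨c, hc, hceq⟩ := exists_hasDerivAt_eq_slope g h (half_pos hδ : (0:ℝ) < b) hcont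
    (fun t ht => (hδprop t (hbδ t ⟨le_of_lt ht.1, le_of_lt ht.2⟩)).2.1)
  have hgb : g 0 ≤ g b := (hδprop b (hbδ b ⟨(half_pos hδ).le, le_refl _⟩)).2.2
  have hcneg : h c < 0 := (hδprop c (hbδ c ⟨hc.1.le, hc.2.le⟩)).1 hc.1
  rw [hceq] at hcneg
  have : 0 ≤ (g b - g 0) / (b - 0) := by
    apply div_nonneg (by linarith) (by simp only [hb]; linarith)
  linarith

/-- Second directional derivative is nonneg at a local min of a C² function. -/
lemma aux_dir2_nonneg {n : ℕ} {w : En n → ℝ} {x : En n} (hw : ContDiffAt ℝ 2 w x)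
    (hmin : IsLocalMin w x) (v : En n) :
    0 ≤ fderiv ℝ (fderiv ℝ w) x v v := by
  set L : ℝ → En n := fun t => x + t • v with hL
  have hLd : ∀ t : ℝ, HasDerivAt L v t := by
    intro t
    simpa [hL] using ((hasDerivAt_id t).smul_const v).const_add x
  have hLc : Continuous L := by
    have := fun t => (hLd t).continuousAt
    exact continuous_iff_continuousAt.2 this
  have hL0 : L 0 = x := by simp [hL]
  -- differentiability near x
  have hev : ∀ᶠ y in 𝓝 x, DifferentiableAt ℝ w y := by
    filter_upwards [hw.eventually (by simp)] with y hy
    exact hy.differentiableAt (by norm_num)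
  have hg : ∀ᶠ t in 𝓝 (0:ℝ), HasDerivAt (fun t => w (L t)) (fderiv ℝ w (L t) v) t := by
    have htd : Filter.Tendsto L (𝓝 0) (𝓝 x) := by
      rw [← hL0]; exact (hLc.continuousAt : ContinuousAt L 0)
    filter_upwards [htd.eventually hev] with t ht
    exact ht.hasFDerivAt.comp_hasDerivAt t (hLd t)
  have hF : DifferentiableAt ℝ (fderiv ℝ w) x :=
    (hw.fderiv_right (m := 1) (by norm_num)).differentiableAt (by norm_num)
  have hh : HasDerivAt (fun t => fderiv ℝ w (L t) v) (fderiv ℝ (fderiv ℝ w) x v v) 0 := by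
    have h1 : HasDerivAt (fun t => fderiv ℝ w (L t)) (fderiv ℝ (fderiv ℝ w) x v) 0 := by
      have := hF.hasFDerivAt.comp_hasDerivAt_of_eq (0:ℝ) (hLd 0) hL0.symm
      exact this
    simpa using h1.clm_apply (hasDerivAt_const (0:ℝ) v)
  have hgmin : IsLocalMin (fun t => w (L t)) 0 := by
    have htd : Filter.Tendsto L (𝓝 0) (𝓝 x) := by
      rw [← hL0]; exact (hLc.continuousAt : ContinuousAt L 0)
    have hminev : ∀ᶠ y in 𝓝 x, w x ≤ w y := hmin
    have : ∀ᶠ t in 𝓝 (0:ℝ), w x ≤ w (L t) := htd.eventually hminev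
    simpa [IsLocalMin, IsMinFilter, hL0] using this
  exact aux_second_deriv_nonneg_s13 hg hh hgmin

/-- Trace of Hessian nonneg at a local min. -/
lemma aux_trace_hess_nonneg {n : ℕ} {w : En n → ℝ} {x : En n} (hw : ContDiffAt ℝ 2 w x)
    (hmin : IsLocalMin w x) : 0 ≤ (hess w x).trace := by
  rw [Matrix.trace]
  apply Finset.sum_nonneg
  intro i _
  have := aux_dir2_nonneg hw hmin (EuclideanSpace.single i 1)
  simpa [hess, Matrix.diag, iteratedFDeriv_two_apply] using this

/-- Hessian of a difference, entrywise. -/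
lemma aux_hess_sub {n : ℕ} {Ω : Set (En n)} (hΩ : IsOpen Ω) {a b : En n → ℝ}
    (ha : ContDiffOn ℝ 2 a Ω) (hb : ContDiffOn ℝ 2 b Ω) {x : En n} (hx : x ∈ Ω) :
    hess (fun y => a y - b y) x = hess a x - hess b x := by
  have haA : ContDiffAt ℝ 2 a x := ha.contDiffAt (hΩ.mem_nhds hx)
  have hbA : ContDiffAt ℝ 2 b x := hb.contDiffAt (hΩ.mem_nhds hx)
  have hev : fderiv ℝ (fun y => a y - b y) =ᶠ[𝓝 x] fun y => fderiv ℝ a y - fderiv ℝ b y := by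
    filter_upwards [haA.eventually (by simp), hbA.eventually (by simp)] with y hay hby
    exact fderiv_sub (hay.differentiableAt (by norm_num)) (hby.differentiableAt (by norm_num))
  have hfa : DifferentiableAt ℝ (fderiv ℝ a) x :=
    (haA.fderiv_right (m := 1) (by norm_num)).differentiableAt (by norm_num)
  have hfb : DifferentiableAt ℝ (fderiv ℝ b) x :=
    (hbA.fderiv_right (m := 1) (by norm_num)).differentiableAt (by norm_num)
  have key : fderiv ℝ (fderiv ℝ (fun y => a y - b y)) x
      = fderiv ℝ (fderiv ℝ a) x - fderiv ℝ (fderiv ℝ b) x := by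
    rw [hev.fderiv_eq, fderiv_fun_sub hfa hfb]
  ext i j
  simp only [hess, Matrix.sub_apply, Matrix.of_apply, iteratedFDeriv_two_apply]
  rw [key]
  simp

/-- Minimum principle. -/
lemma aux_minprinc {n : ℕ} {Ω : Set (En n)} (hΩo : IsOpen Ω) (hΩb : IsBounded Ω)
    {w : En n → ℝ} (hw : ContDiffOn ℝ 2 w Ω) (hwc : ContinuousOn w (closure Ω))
    (hbd : ∀ x ∈ frontier Ω, 0 ≤ w x)
    (hint : ∀ x ∈ Ω, w x < 0 → (hess w x).trace < 0) :
    ∀ x ∈ Ω, 0 ≤ w x := by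
  intro x hx
  by_contra hneg
  push_neg at hneg
  have hcpt : IsCompact (closure Ω) := hΩb.isCompact_closure
  obtain ⟨x₀, hx₀, hmin⟩ := hcpt.exists_isMinOn ⟨x, subset_closure hx⟩ hwc
  have hwx0 : w x₀ < 0 := lt_of_le_of_lt (hmin (subset_closure hx)) hneg
  have hx₀Ω : x₀ ∈ Ω := by
    by_contra hmem
    have : x₀ ∈ frontier Ω := by
      rw [hΩo.frontier_eq]
      exact ⟨hx₀, hmem⟩
    exact absurd (hbd x₀ this) (not_le.2 hwx0)
  have hloc : IsLocalMin w x₀ :=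
    hmin.isLocalMin (mem_of_superset (hΩo.mem_nhds hx₀Ω) subset_closure)
  have hC : ContDiffAt ℝ 2 w x₀ := hw.contDiffAt (hΩo.mem_nhds hx₀Ω)
  exact absurd (aux_trace_hess_nonneg hC hloc) (not_le.2 (hint x₀ hx₀Ω hwx0))

/-- for the four auxiliary functions ū, v̲, v̄, u̲ (all in C²(Ω) ∩ C(cl Ω),
vanishing on ∂Ω and solving the indicated equations), one has ū ≥ 0, v̄ ≥ 0, ū ≥ u̲ and
v̄ ≥ v̲ in Ω. -/
theorem barriers_ordered {n : ℕ}
    (Ω : Set (En n)) (hΩo : IsOpen Ω) (hΩb : IsBounded Ω)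
    (lam al be : ℝ) (hlam : 0 < lam) (hal : 0 < al) (hbe : 0 < be)
    (f g : En n → ℝ)
    (hf : ContDiffOn ℝ (⊤ : ℕ∞) f (closure Ω)) (hg : ContDiffOn ℝ (⊤ : ℕ∞) g (closure Ω))
    (hf0 : ∀ x ∈ closure Ω, 0 ≤ f x) (hg0 : ∀ x ∈ closure Ω, 0 ≤ g x)
    (ubar vbar ulow vlow : En n → ℝ)
    (hubar : ContDiffOn ℝ 2 ubar Ω) (hubarc : ContinuousOn ubar (closure Ω))
    (hvbar : ContDiffOn ℝ 2 vbar Ω) (hvbarc : ContinuousOn vbar (closure Ω))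
    (hulow : ContDiffOn ℝ 2 ulow Ω) (hulowc : ContinuousOn ulow (closure Ω))
    (hvlow : ContDiffOn ℝ 2 vlow Ω) (hvlowc : ContinuousOn vlow (closure Ω))
    (hubar_bd : ∀ x ∈ frontier Ω, ubar x = 0)
    (hvbar_bd : ∀ x ∈ frontier Ω, vbar x = 0)
    (hulow_bd : ∀ x ∈ frontier Ω, ulow x = 0)
    (hvlow_bd : ∀ x ∈ frontier Ω, vlow x = 0)
    (hubar_eq : ∀ x ∈ Ω, -(hess ubar x).trace + lam * ubar x - f x = 0)
    (hvlow_eq : ∀ x ∈ Ω,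
      -(hess vlow x).trace + lam * vlow x + be * max (ubar x) (vlow x) - g x = 0)
    (hvbar_eq : ∀ x ∈ Ω, -(hess vbar x).trace + lam * vbar x - g x = 0)
    (hulow_eq : ∀ x ∈ Ω,
      -(hess ulow x).trace + lam * ulow x + al * max (ulow x) (vbar x) - f x = 0) :
    (∀ x ∈ Ω, 0 ≤ ubar x) ∧ (∀ x ∈ Ω, 0 ≤ vbar x) ∧
    (∀ x ∈ Ω, ulow x ≤ ubar x) ∧ (∀ x ∈ Ω, vlow x ≤ vbar x) := by
  
  have hub : ∀ x ∈ Ω, 0 ≤ ubar x := by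
    apply aux_minprinc hΩo hΩb hubar hubarc
    · intro x hx; exact (hubar_bd x hx).ge
    · intro x hx hneg
      have hfx : 0 ≤ f x := hf0 x (subset_closure hx)
      have h1 := hubar_eq x hx
      nlinarith [mul_neg_of_pos_of_neg hlam hneg]
  have hvb : ∀ x ∈ Ω, 0 ≤ vbar x := by
    apply aux_minprinc hΩo hΩb hvbar hvbarc
    · intro x hx; exact (hvbar_bd x hx).ge
    · intro x hx hneg
      have hgx : 0 ≤ g x := hg0 x (subset_closure hx)
      have h1 := hvbar_eq x hx
      nlinarith [mul_neg_of_pos_of_neg hlam hneg]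
  have huu : ∀ x ∈ Ω, 0 ≤ ubar x - ulow x := by
    apply aux_minprinc (w := fun y => ubar y - ulow y) hΩo hΩb (hubar.sub hulow)
        (hubarc.sub hulowc)
    · intro x hx; rw [hubar_bd x hx, hulow_bd x hx]; simp
    · intro x hx hneg
      rw [aux_hess_sub hΩo hubar hulow hx, Matrix.trace_sub]
      have h1 := hubar_eq x hx
      have h2 := hulow_eq x hx
      have hmax : 0 ≤ max (ulow x) (vbar x) := le_trans (hvb x hx) (le_max_right _ _)
      nlinarith [mul_neg_of_pos_of_neg hlam hneg, mul_nonneg hal.le hmax]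
  have hvv : ∀ x ∈ Ω, 0 ≤ vbar x - vlow x := by
    apply aux_minprinc (w := fun y => vbar y - vlow y) hΩo hΩb (hvbar.sub hvlow)
        (hvbarc.sub hvlowc)
    · intro x hx; rw [hvbar_bd x hx, hvlow_bd x hx]; simp
    · intro x hx hneg
      rw [aux_hess_sub hΩo hvbar hvlow hx, Matrix.trace_sub]
      have h1 := hvbar_eq x hx
      have h2 := hvlow_eq x hx
      have hmax : 0 ≤ max (ubar x) (vlow x) := le_trans (hub x hx) (le_max_left _ _)
      nlinarith [mul_neg_of_pos_of_neg hlam hneg, mul_nonneg hbe.le hmax]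
  exact ⟨hub, hvb, fun x hx => by linarith [huu x hx], fun x hx => by linarith [hvv x hx]⟩
end
end
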